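/- arXiv:0807.3644 — 5 statements merged into one kernel-verified Lean document; each statement's English description precedes it below -/
import Mathlib

section
/- Let A be symmetric positive definite, b ∈ R^n, x ∈ R^n, r = b − Ax, E an n×m matrix of distinct standard basis columns with index set J, y = (EᵀAE)^{-1}Eᵀr, and x_new = x + Ey. With d = A^{-1}b − x and d_new = A^{-1}b − x_new, one has ‖d‖_A² − ‖d_new‖_A² = (y, Eᵀr). -/
/-!
Since `A d = r`, the vector `y` solves the Galerkin system `EᵀAE y = EᵀA d`, so `E y` is the
`A`-orthogonal projection of `d` onto the range of `E`. Hence both the cross term `(E y, A d)` and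
the energy `(E y, A E y)` equal `(y, Eᵀ r)`, and expanding `‖d - E y‖_A²` gives the identity.
The invertibility of `EᵀAE` comes from the injectivity of `E`, which holds because its columns
are distinct basis vectors.
-/

open Matrix

namespace Matrix

variable {R : Type*} {m n : Type*} [Fintype m]

lemma mulVec_of_ite_apply [NonAssocSemiring R] [DecidableEq n] {f : m → n}
    (hf : Function.Injective f) (v : m → R) (j : m) :
    ((of fun i k => if i = f k then (1 : R) else 0) *ᵥ v) (f j) = v j := by
  simp only [mulVec, dotProduct, of_apply, ite_mul, one_mul, zero_mul]
  rw [Finset.sum_eq_single_of_mem j (Finset.mem_univ j) fun i _ hij => if_neg (hf.ne hij).symm,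
    if_pos rfl]

lemma injective_mulVec_of_ite [NonAssocSemiring R] [DecidableEq n] {f : m → n}
    (hf : Function.Injective f) :
    Function.Injective (of fun i k => if i = f k then (1 : R) else 0).mulVec :=
  fun v w h => funext fun j => by
    rw [← mulVec_of_ite_apply hf v j, ← mulVec_of_ite_apply hf w j, h]

lemma mulVec_nonsing_inv_mulVec [Fintype n] [DecidableEq n] [CommRing R] {M : Matrix n n R}
    (hM : IsUnit M) (v : n → R) : M *ᵥ (M⁻¹ *ᵥ v) = v := by
  rw [mulVec_mulVec, mul_nonsing_inv M (M.isUnit_iff_isUnit_det.mp hM), one_mulVec]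

lemma IsSymm.dotProduct_mulVec_comm [Fintype n] [CommSemiring R] {A : Matrix n n R}
    (hA : A.IsSymm) (u v : n → R) : u ⬝ᵥ A *ᵥ v = v ⬝ᵥ A *ᵥ u := by
  rw [dotProduct_mulVec, ← mulVec_transpose, hA.eq, dotProduct_comm]

lemma mulVec_dotProduct_eq_dotProduct_transpose_mulVec [Fintype n] [CommSemiring R]
    (E : Matrix n m R) (y : m → R) (w : n → R) : E *ᵥ y ⬝ᵥ w = y ⬝ᵥ Eᵀ *ᵥ w := by
  rw [← vecMul_transpose, ← dotProduct_mulVec]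

lemma dotProduct_mulVec_sub_dotProduct_mulVec_of_galerkin [Fintype n] [CommRing R]
    {A : Matrix n n R} (hA : A.IsSymm) (E : Matrix n m R) (d : n → R) (y : m → R)
    (hy : (Eᵀ * A * E) *ᵥ y = Eᵀ *ᵥ (A *ᵥ d)) :
    d ⬝ᵥ A *ᵥ d - (d - E *ᵥ y) ⬝ᵥ A *ᵥ (d - E *ᵥ y) =
      y ⬝ᵥ (Eᵀ *ᵥ (A *ᵥ d)) := by
  have hcross : E *ᵥ y ⬝ᵥ A *ᵥ d = y ⬝ᵥ (Eᵀ *ᵥ (A *ᵥ d)) :=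
    mulVec_dotProduct_eq_dotProduct_transpose_mulVec E y _
  have henergy : E *ᵥ y ⬝ᵥ A *ᵥ (E *ᵥ y) = y ⬝ᵥ (Eᵀ *ᵥ (A *ᵥ d)) := by
    rw [mulVec_dotProduct_eq_dotProduct_transpose_mulVec, ← hy, mulVec_mulVec, mulVec_mulVec,
      Matrix.mul_assoc]
  rw [mulVec_sub, dotProduct_sub, sub_dotProduct, sub_dotProduct,
    hA.dotProduct_mulVec_comm d (E *ᵥ y), hcross, henergy]
  ring

end Matrix

/-- With `r = b - Ax`, `y = (EᵀAE)⁻¹ Eᵀ r`, `x_new = x + E y`, `d = A⁻¹b - x`,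
`d_new = A⁻¹b - x_new`, one has `‖d‖_A² - ‖d_new‖_A² = (y, Eᵀ r)`. -/
theorem stmt6 {n m : ℕ} (A : Matrix (Fin n) (Fin n) ℝ) (hA : A.PosDef)
    (f : Fin m → Fin n) (hf : Function.Injective f)
    (E : Matrix (Fin n) (Fin m) ℝ)
    (hE : E = Matrix.of fun i j => if i = f j then (1 : ℝ) else 0)
    (b x r : Fin n → ℝ) (hr : r = b - A *ᵥ x)
    (y : Fin m → ℝ) (hy : y = (Eᵀ * A * E)⁻¹ *ᵥ (Eᵀ *ᵥ r))
    (xnew : Fin n → ℝ) (hxnew : xnew = x + E *ᵥ y)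
    (d dnew : Fin n → ℝ) (hd : d = A⁻¹ *ᵥ b - x) (hdnew : dnew = A⁻¹ *ᵥ b - xnew) :
    d ⬝ᵥ A *ᵥ d - dnew ⬝ᵥ A *ᵥ dnew = y ⬝ᵥ (Eᵀ *ᵥ r) := by
  have hAd : A *ᵥ d = r := by
    rw [hd, hr, mulVec_sub, mulVec_nonsing_inv_mulVec hA.isUnit]
  have hEAE : (Eᵀ * A * E).PosDef := by
    simpa [conjTranspose_eq_transpose_of_trivial] using
      hA.conjTranspose_mul_mul_same (hE ▸ injective_mulVec_of_ite hf)
  have hgalerkin : (Eᵀ * A * E) *ᵥ y = Eᵀ *ᵥ (A *ᵥ d) := by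
    rw [hy, hAd, mulVec_nonsing_inv_mulVec hEAE.isUnit]
  have hdnew' : dnew = d - E *ᵥ y := by
    rw [hdnew, hxnew, hd]
    abel
  rw [hdnew', ← hAd]
  exact dotProduct_mulVec_sub_dotProduct_mulVec_of_galerkin
    (isHermitian_iff_isSymm.mp hA.isHermitian) E d y hgalerkin
end

section
/- Under the same setup (A SPD, r = b − Ax, projection onto coordinates J, x_new = x + E(EᵀAE)^{-1}Eᵀr, d = A^{-1}b − x, d_new = A^{-1}b − x_new), if r ≠ 0 then ‖d_new‖_A ≤ (1 − (λ_min(A)/Σ_{k∈J} a_{kk}) · (Σ_{k∈J} r_k² / Σ_{k=1}^n r_k²))^{1/2} ‖d‖_A. -/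
/-!
Galerkin orthogonality gives `‖d_new‖_A² = ‖d‖_A² - P` with `P = (Eᵀr)ᵀ (EᵀAE)⁻¹ (Eᵀr)`.
The quadratic form of the positive semidefinite block `EᵀAE` is bounded by its trace
`Σ_{k∈J} a_kk` times the Euclidean norm squared, hence `P ≥ Σ_{k∈J} r_k² / Σ_{k∈J} a_kk`;
on the other side `λ_min(A) ‖d‖_A² ≤ ‖Ad‖² = ‖r‖²`. Multiplying the two bounds yields
`P ≥ (λ_min / Σ_{k∈J} a_kk) (Σ_{k∈J} r_k² / ‖r‖²) ‖d‖_A²`.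
-/

open Matrix

theorem Matrix.IsSymm.dotProduct_mulVec_comm_s8 {R ι : Type*} [CommSemiring R] [Fintype ι]
    {A : Matrix ι ι R} (hA : A.IsSymm) (u v : ι → R) : u ⬝ᵥ A *ᵥ v = v ⬝ᵥ A *ᵥ u := by
  rw [dotProduct_mulVec, ← mulVec_transpose, hA.eq, dotProduct_comm]

theorem Matrix.IsSymm.dotProduct_mulVec_sub_mulVec_of_galerkin {R ι κ : Type*} [CommRing R]
    [Fintype ι] [Fintype κ] {A : Matrix ι ι R} (hA : A.IsSymm) (E : Matrix ι κ R)
    {d r : ι → R} {y : κ → R} (hAd : A *ᵥ d = r) (hy : (Eᵀ * A * E) *ᵥ y = Eᵀ *ᵥ r) :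
    (d - E *ᵥ y) ⬝ᵥ A *ᵥ (d - E *ᵥ y) = d ⬝ᵥ A *ᵥ d - (Eᵀ *ᵥ r) ⬝ᵥ y := by
  have hEr : E *ᵥ y ⬝ᵥ r = (Eᵀ *ᵥ r) ⬝ᵥ y := by
    rw [dotProduct_comm (Eᵀ *ᵥ r), dotProduct_mulVec, vecMul_transpose]
  have hEAE : E *ᵥ y ⬝ᵥ A *ᵥ (E *ᵥ y) = (Eᵀ *ᵥ r) ⬝ᵥ y := by
    rw [← hy, ← mulVec_mulVec, ← mulVec_mulVec, dotProduct_comm _ y, dotProduct_mulVec y,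
      vecMul_transpose]
  rw [mulVec_sub, dotProduct_sub, sub_dotProduct, sub_dotProduct,
    hA.dotProduct_mulVec_comm_s8 d (E *ᵥ y), hAd, hEr, hEAE]
  ring

namespace Matrix.IsHermitian

variable {ι : Type*} [Fintype ι] [DecidableEq ι] {A : Matrix ι ι ℝ} (hA : A.IsHermitian)

theorem exists_sum_eigenvalues_mul_sq (z : ι → ℝ) : ∃ w : ι → ℝ,
    z ⬝ᵥ A *ᵥ z = ∑ i, hA.eigenvalues i * w i ^ 2 ∧ z ⬝ᵥ z = ∑ i, w i ^ 2 := by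
  set U : Matrix ι ι ℝ := ↑hA.eigenvectorUnitary with hU
  have hUU : U * Uᵀ = 1 := by
    simpa [hU, star_eq_conjTranspose] using Unitary.mul_star_self_of_mem hA.eigenvectorUnitary.2
  refine ⟨Uᵀ *ᵥ z, ?_, ?_⟩
  · conv_lhs => rw [hA.spectral_theorem, Unitary.conjStarAlgAut_apply]
    rw [← hU, star_eq_conjTranspose, conjTranspose_eq_transpose_of_trivial, ← mulVec_mulVec,
      ← mulVec_mulVec, dotProduct_mulVec, ← mulVec_transpose]
    simp only [dotProduct, mulVec_diagonal]
    refine Finset.sum_congr rfl fun i _ => ?_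
    simp only [Function.comp_apply, RCLike.ofReal_real_eq_id, id]
    ring
  · simp only [sq]
    rw [← dotProduct, dotProduct_mulVec, ← mulVec_transpose, transpose_transpose, mulVec_mulVec,
      hUU, one_mulVec]

theorem iInf_eigenvalues_mul_dotProduct_self_le (z : ι → ℝ) :
    (⨅ i, hA.eigenvalues i) * (z ⬝ᵥ z) ≤ z ⬝ᵥ A *ᵥ z := by
  obtain ⟨w, hAz, hz⟩ := hA.exists_sum_eigenvalues_mul_sq z
  rw [hAz, hz, Finset.mul_sum]
  exact Finset.sum_le_sum fun i _ => mul_le_mul_of_nonneg_right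
    (ciInf_le (Set.finite_range _).bddBelow i) (sq_nonneg _)

end Matrix.IsHermitian

namespace Matrix.PosSemidef

variable {ι : Type*} [Fintype ι] {A : Matrix ι ι ℝ}

theorem dotProduct_mulVec_le_trace_mul (hA : A.PosSemidef) (z : ι → ℝ) :
    z ⬝ᵥ A *ᵥ z ≤ A.trace * (z ⬝ᵥ z) := by
  classical
  obtain ⟨w, hAz, hz⟩ := hA.1.exists_sum_eigenvalues_mul_sq z
  rw [hAz, hz, hA.1.trace_eq_sum_eigenvalues, Finset.sum_mul]
  refine Finset.sum_le_sum fun i _ => mul_le_mul_of_nonneg_left ?_ (hA.eigenvalues_nonneg i)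
  exact Finset.single_le_sum (f := fun j => w j ^ 2) (fun j _ => sq_nonneg _) (Finset.mem_univ i)

theorem iInf_eigenvalues_mul_dotProduct_mulVec_le [DecidableEq ι] (hA : A.PosSemidef)
    (z : ι → ℝ) : (⨅ i, hA.1.eigenvalues i) * (z ⬝ᵥ A *ᵥ z) ≤ (A *ᵥ z) ⬝ᵥ (A *ᵥ z) := by
  set μ := ⨅ i, hA.1.eigenvalues i
  have hμ : 0 ≤ μ := Real.iInf_nonneg hA.eigenvalues_nonneg
  have hRayleigh := hA.1.iInf_eigenvalues_mul_dotProduct_self_le z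
  -- `0 ≤ ‖Az - μz‖²` together with `μ² ‖z‖² ≤ μ zᵀAz`
  have hsq := dotProduct_self_star_nonneg (A *ᵥ z - μ • z)
  simp only [star_trivial, dotProduct_sub, sub_dotProduct, dotProduct_smul, smul_dotProduct,
    smul_eq_mul] at hsq
  rw [dotProduct_comm (A *ᵥ z) z] at hsq
  nlinarith [mul_le_mul_of_nonneg_left hRayleigh hμ]

theorem dotProduct_self_div_trace_le (hA : A.PosSemidef) {y z : ι → ℝ} (hAy : A *ᵥ y = z) :
    (z ⬝ᵥ z) / A.trace ≤ z ⬝ᵥ y := by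
  have hP : 0 ≤ z ⬝ᵥ y := by
    simpa [← hAy, dotProduct_comm] using hA.dotProduct_mulVec_nonneg y
  rcases hA.trace_nonneg.eq_or_lt with ht | ht
  · simpa [← ht] using hP
  rw [div_le_iff₀' ht]
  have hsymm : y ⬝ᵥ A *ᵥ z = z ⬝ᵥ z := by
    rw [(isHermitian_iff_isSymm.mp hA.1).dotProduct_mulVec_comm_s8, hAy]
  -- expand `0 ≤ (z - t y)ᵀA(z - t y)` for `t = tr A`, then use `zᵀAz ≤ t ‖z‖²`
  have hsq := hA.dotProduct_mulVec_nonneg (z - A.trace • y)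
  simp only [star_trivial, mulVec_sub, mulVec_smul, dotProduct_sub, sub_dotProduct,
    dotProduct_smul, smul_dotProduct, smul_eq_mul, hAy, hsymm, dotProduct_comm y z] at hsq
  nlinarith [hA.dotProduct_mulVec_le_trace_mul z]

end Matrix.PosSemidef

section SelectionMatrix

variable {R ι κ : Type*} [NonAssocSemiring R] [Fintype ι] [DecidableEq ι] (f : κ → ι)

theorem Matrix.transpose_of_ite_mulVec (v : ι → R) :
    (of fun i j => if i = f j then (1 : R) else 0)ᵀ *ᵥ v = v ∘ f := by
  ext j
  simp [mulVec, dotProduct]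

theorem Matrix.transpose_of_ite_mul_mul (A : Matrix ι ι R) :
    (of fun i j => if i = f j then (1 : R) else 0)ᵀ * A *
      (of fun i j => if i = f j then (1 : R) else 0) = A.submatrix f f := by
  ext i j
  simp [mul_apply]

end SelectionMatrix

theorem div_mul_div_mul_le {μ D R S T P : ℝ} (hS : 0 ≤ S) (hT : 0 ≤ T) (hR : 0 ≤ R)
    (hμD : μ * D ≤ R) (hST : S / T ≤ P) : μ / T * (S / R) * D ≤ P :=
  calc μ / T * (S / R) * D = μ * D / R * (S / T) := by ring
    _ ≤ 1 * (S / T) := by gcongr; exact div_le_one_of_le₀ hμD hR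
    _ ≤ P := (one_mul _).trans_le hST

theorem stmt8_general {n m : ℕ} (A : Matrix (Fin n) (Fin n) ℝ) (hA : A.PosDef)
    (f : Fin m → Fin n) (hf : Function.Injective f)
    (E : Matrix (Fin n) (Fin m) ℝ)
    (hE : E = Matrix.of fun i j => if i = f j then (1 : ℝ) else 0)
    (b x r : Fin n → ℝ) (hr : r = b - A *ᵥ x)
    (y : Fin m → ℝ) (hy : y = (Eᵀ * A * E)⁻¹ *ᵥ (Eᵀ *ᵥ r))
    (xnew : Fin n → ℝ) (hxnew : xnew = x + E *ᵥ y)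
    (d dnew : Fin n → ℝ) (hd : d = A⁻¹ *ᵥ b - x) (hdnew : dnew = A⁻¹ *ᵥ b - xnew) :
    Real.sqrt (dnew ⬝ᵥ A *ᵥ dnew) ≤
      Real.sqrt (1 - ((⨅ i, hA.isHermitian.eigenvalues i) / ∑ j : Fin m, A (f j) (f j)) *
          ((∑ j : Fin m, (r (f j)) ^ 2) / ∑ k : Fin n, (r k) ^ 2)) *
        Real.sqrt (d ⬝ᵥ A *ᵥ d) := by
  have hMsub : Eᵀ * A * E = A.submatrix f f := by rw [hE]; exact transpose_of_ite_mul_mul f A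
  have hMpos : (Eᵀ * A * E).PosDef := hMsub ▸ hA.submatrix hf
  have hAd : A *ᵥ d = r := by
    rw [hd, mulVec_sub, mulVec_mulVec, mul_nonsing_inv A (A.isUnit_iff_isUnit_det.mp hA.isUnit),
      one_mulVec, hr]
  have hMy : (Eᵀ * A * E) *ᵥ y = Eᵀ *ᵥ r := by
    rw [hy, mulVec_mulVec, mul_nonsing_inv _ ((isUnit_iff_isUnit_det _).mp hMpos.isUnit),
      one_mulVec]
  have hEnergy : dnew ⬝ᵥ A *ᵥ dnew = d ⬝ᵥ A *ᵥ d - (Eᵀ *ᵥ r) ⬝ᵥ y := by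
    rw [show dnew = d - E *ᵥ y by rw [hdnew, hxnew, hd]; abel]
    exact (isHermitian_iff_isSymm.mp hA.isHermitian).dotProduct_mulVec_sub_mulVec_of_galerkin
      E hAd hMy
  have hEr : Eᵀ *ᵥ r = r ∘ f := by rw [hE]; exact transpose_of_ite_mulVec f r
  have hSubspace : (∑ j, r (f j) ^ 2) / ∑ j, A (f j) (f j) ≤ (Eᵀ *ᵥ r) ⬝ᵥ y := by
    simpa [hEr, hMsub, trace, dotProduct, sq] using
      hMpos.posSemidef.dotProduct_self_div_trace_le hMy
  have hResidual : (⨅ i, hA.isHermitian.eigenvalues i) * (d ⬝ᵥ A *ᵥ d) ≤ ∑ k, r k ^ 2 := by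
    simpa [hAd, dotProduct, sq] using hA.posSemidef.iInf_eigenvalues_mul_dotProduct_mulVec_le d
  have hD : 0 ≤ d ⬝ᵥ A *ᵥ d := by simpa using hA.posSemidef.dotProduct_mulVec_nonneg d
  have hDecrease := div_mul_div_mul_le (by positivity)
    (Fintype.sum_nonneg fun _ ↦ hA.posSemidef.diag_nonneg) (by positivity) hResidual hSubspace
  rw [hEnergy, ← Real.sqrt_mul' _ hD]
  exact Real.sqrt_le_sqrt (by linarith)

/-- If `r ≠ 0` then
`‖d_new‖_A ≤ (1 - (λ_min(A)/Σ_{k∈J}a_{kk})·(Σ_{k∈J}r_k²/Σ_k r_k²))^{1/2} ‖d‖_A`. -/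
theorem stmt8 {n m : ℕ} (hm : 0 < m) (A : Matrix (Fin n) (Fin n) ℝ) (hA : A.PosDef)
    (f : Fin m → Fin n) (hf : Function.Injective f)
    (E : Matrix (Fin n) (Fin m) ℝ)
    (hE : E = Matrix.of fun i j => if i = f j then (1 : ℝ) else 0)
    (b x r : Fin n → ℝ) (hr : r = b - A *ᵥ x) (hr0 : r ≠ 0)
    (y : Fin m → ℝ) (hy : y = (Eᵀ * A * E)⁻¹ *ᵥ (Eᵀ *ᵥ r))
    (xnew : Fin n → ℝ) (hxnew : xnew = x + E *ᵥ y)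
    (d dnew : Fin n → ℝ) (hd : d = A⁻¹ *ᵥ b - x) (hdnew : dnew = A⁻¹ *ᵥ b - xnew) :
    Real.sqrt (dnew ⬝ᵥ A *ᵥ dnew) ≤
      Real.sqrt (1 - ((⨅ i, hA.isHermitian.eigenvalues i) / ∑ j : Fin m, A (f j) (f j)) *
          ((∑ j : Fin m, (r (f j)) ^ 2) / ∑ k : Fin n, (r k) ^ 2)) *
        Real.sqrt (d ⬝ᵥ A *ᵥ d) :=
  stmt8_general A hA f hf E hE b x r hr y hy xnew hxnew d dnew hd hdnew
end

section
/- With A SPD, d = A^{-1}b − x, r = b − Ax ≠ 0, and J containing the indices of the m components of r with largest absolute value, the contraction factor c = (1 − (λ_min(A)/Σ_{k∈J}a_{kk})(Σ_{k∈J}r_k²/Σ_{k=1}^n r_k²))^{1/2} satisfies 0 ≤ c < 1; in particular each projection step strictly reduces the A-norm of the error. -/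
/-!
The eigenvalues and the diagonal entries of a positive definite matrix are positive, and a
sub-sum of `∑ r_k²` that contains a largest-magnitude component of `r ≠ 0` is positive. Hence the
number subtracted from `1` under the square root is positive, so `c < 1`; `0 ≤ c` holds for any
square root.
-/

open Matrix

theorem ciInf_pos_of_finite {ι : Type*} [Finite ι] [Nonempty ι] {f : ι → ℝ}
    (hf : ∀ i, 0 < f i) : 0 < ⨅ i, f i := by
  obtain ⟨i, hi⟩ := exists_eq_ciInf_of_finite (f := f)
  exact hi ▸ hf i

theorem Matrix.PosDef.iInf_eigenvalues_pos {n : Type*} [Fintype n] [DecidableEq n] [Nonempty n]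
    {A : Matrix n n ℝ} (hA : A.PosDef) : 0 < ⨅ i, hA.isHermitian.eigenvalues i :=
  ciInf_pos_of_finite hA.eigenvalues_pos

theorem sum_sq_pos_of_ne_zero {ι : Type*} [Fintype ι] {r : ι → ℝ} (hr : r ≠ 0) :
    0 < ∑ k, r k ^ 2 := by
  obtain ⟨k, hk⟩ := Function.ne_iff.mp hr
  exact Finset.sum_pos' (fun _ _ => sq_nonneg _) ⟨k, Finset.mem_univ k, pow_two_pos_of_ne_zero hk⟩

theorem sum_sq_comp_pos_of_abs_le {ι κ : Type*} [Fintype κ] {r : ι → ℝ} (hr : r ≠ 0)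
    (g : κ → ι) {j : κ} (hj : ∀ k, |r k| ≤ |r (g j)|) : 0 < ∑ i, r (g i) ^ 2 := by
  have hrj : r (g j) ≠ 0 := by
    obtain ⟨k, hk⟩ := Function.ne_iff.mp hr
    exact abs_pos.mp ((abs_pos.mpr hk).trans_le (hj k))
  exact Finset.sum_pos' (fun _ _ => sq_nonneg _) ⟨j, Finset.mem_univ j, pow_two_pos_of_ne_zero hrj⟩

theorem stmt9_general {n m : ℕ} (A : Matrix (Fin n) (Fin n) ℝ) (hA : A.PosDef)
    (f : Fin m → Fin n)
    (r : Fin n → ℝ) (hr0 : r ≠ 0)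
    (hJ : ∃ j : Fin m, ∀ k : Fin n, |r k| ≤ |r (f j)|)
    (c : ℝ)
    (hc : c = Real.sqrt (1 -
        ((⨅ i, hA.isHermitian.eigenvalues i) / ∑ j : Fin m, A (f j) (f j)) *
          ((∑ j : Fin m, (r (f j)) ^ 2) / ∑ k : Fin n, (r k) ^ 2))) :
    0 ≤ c ∧ c < 1 := by
  obtain ⟨j, hj⟩ := hJ
  have : Nonempty (Fin n) := ⟨f j⟩
  have heig := hA.iInf_eigenvalues_pos
  have hdiag : 0 < ∑ i : Fin m, A (f i) (f i) :=
    Finset.sum_pos (fun _ _ => hA.diag_pos) ⟨j, Finset.mem_univ j⟩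
  have hJsum := sum_sq_comp_pos_of_abs_le hr0 f hj
  have hsum := sum_sq_pos_of_ne_zero hr0
  have hdecrease : 0 < ((⨅ i, hA.isHermitian.eigenvalues i) / ∑ j : Fin m, A (f j) (f j)) *
      ((∑ j : Fin m, (r (f j)) ^ 2) / ∑ k : Fin n, (r k) ^ 2) := by positivity
  subst hc
  exact ⟨Real.sqrt_nonneg _, (Real.sqrt_lt' one_pos).mpr (by linarith)⟩

/-- If `r ≠ 0` and `J` contains an index of a largest-magnitude component of `r`,
then the contraction factor
`c = (1 - (λ_min(A)/Σ_{k∈J}a_{kk})·(Σ_{k∈J}r_k²/Σ_k r_k²))^{1/2}`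
satisfies `0 ≤ c < 1`. -/
theorem stmt9 {n m : ℕ} (hm : 0 < m) (A : Matrix (Fin n) (Fin n) ℝ) (hA : A.PosDef)
    (f : Fin m → Fin n) (hf : Function.Injective f)
    (b x r : Fin n → ℝ) (hr : r = b - A *ᵥ x) (hr0 : r ≠ 0)
    (hJ : ∃ j : Fin m, ∀ k : Fin n, |r k| ≤ |r (f j)|)
    (c : ℝ)
    (hc : c = Real.sqrt (1 -
        ((⨅ i, hA.isHermitian.eigenvalues i) / ∑ j : Fin m, A (f j) (f j)) *
          ((∑ j : Fin m, (r (f j)) ^ 2) / ∑ k : Fin n, (r k) ^ 2))) :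
    0 ≤ c ∧ c < 1 :=
  stmt9_general A hA f r hr0 hJ c hc
end

section
/- Let A_{k+1} = [[A_k, v_k],[v_kᵀ, α]] be symmetric positive definite, z_k ∈ R^k arbitrary, and r_k = v_k − A_k z_k. Then δ = α − z_kᵀ(v_k + r_k) > 0. In particular the AIB algorithm with approximate solves is breakdown-free for SPD matrices. -/
/-!
Testing the positive definite bordered matrix `[[A, v], [vᵀ, α]]` against the vector `(-z, 1)`
gives `0 < zᵀAz - 2 zᵀv + α`, and `zᵀAz - 2 zᵀv = -zᵀ(v + r)` for `r = v - Az`.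
-/

open Matrix

namespace Matrix

theorem sumElim_dotProduct_fromBlocks_mulVec_sumElim {m n R : Type*} [Fintype m] [Fintype n]
    [CommSemiring R] (A : Matrix m m R) (B : Matrix m n R) (C : Matrix n m R)
    (D : Matrix n n R) (x : m → R) (y : n → R) :
    Sum.elim x y ⬝ᵥ fromBlocks A B C D *ᵥ Sum.elim x y =
      x ⬝ᵥ A *ᵥ x + x ⬝ᵥ B *ᵥ y + (y ⬝ᵥ C *ᵥ x + y ⬝ᵥ D *ᵥ y) := by
  simp only [fromBlocks_mulVec, Sum.elim_comp_inl, Sum.elim_comp_inr,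
    sumElim_dotProduct_sumElim, dotProduct_add]

theorem sumElim_neg_one_dotProduct_fromBlocks_mulVec {k R : Type*} [Fintype k] [CommRing R]
    (A : Matrix k k R) (v z : k → R) (α : R) :
    Sum.elim (-z) (1 : Fin 1 → R) ⬝ᵥ
        fromBlocks A (of fun i (_ : Fin 1) => v i) (of fun _ j => v j) (of fun _ _ => α) *ᵥ
          Sum.elim (-z) 1 =
      α - z ⬝ᵥ (v + (v - A *ᵥ z)) := by
  have hcol : (of fun i (_ : Fin 1) => v i) *ᵥ 1 = v := by
    ext i; simp [mulVec, dotProduct_one]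
  have hrow : (of fun (_ : Fin 1) j => v j) *ᵥ z = fun _ => v ⬝ᵥ z := rfl
  have hcorner : (of fun _ _ => α : Matrix (Fin 1) (Fin 1) R) *ᵥ 1 = fun _ => α := by
    ext i; simp [mulVec, dotProduct_one]
  rw [sumElim_dotProduct_fromBlocks_mulVec_sumElim, mulVec_neg, mulVec_neg, hcol, hrow, hcorner]
  simp only [neg_dotProduct, dotProduct_neg, neg_neg, one_dotProduct, Fin.sum_univ_one,
    dotProduct_add, dotProduct_sub, dotProduct_comm v z]
  ring

end Matrix

/-- If the bordered matrix `[[A,v],[vᵀ,α]]` is SPD, `z` arbitrary and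
`r = v - Az`, then `δ = α - zᵀ(v + r) > 0` (the AIB algorithm with approximate
solves is breakdown-free for SPD matrices). -/
theorem stmt14 {k : ℕ} (A : Matrix (Fin k) (Fin k) ℝ) (v : Fin k → ℝ) (α : ℝ)
    (B : Matrix (Fin k ⊕ Fin 1) (Fin k ⊕ Fin 1) ℝ)
    (hB : B = fromBlocks A (Matrix.of fun i _ => v i) (Matrix.of fun _ j => v j)
      (Matrix.of fun _ _ => α))
    (hBpd : B.PosDef)
    (z : Fin k → ℝ) (r : Fin k → ℝ) (hr : r = v - A *ᵥ z) :
    0 < α - z ⬝ᵥ (v + r) := by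
  have hx : Sum.elim (-z) (1 : Fin 1 → ℝ) ≠ 0 := fun h => by
    simpa using congrFun h (.inr 0)
  have hpos := hBpd.dotProduct_mulVec_pos hx
  rwa [star_trivial, hB, sumElim_neg_one_dotProduct_fromBlocks_mulVec, ← hr] at hpos
end

section
/- Let A be symmetric positive definite, b ∈ R^n, x ∈ R^n with r = b − Ax ≠ 0, and let J = {i} where i is an index with |r_i| = max_k |r_k|. Then Σ_{k∈J} r_k² ≥ ‖r‖₂²/n, so the single-step A-norm error reduction satisfies ‖d‖_A² − ‖d_new‖_A² ≥ ‖r‖₂²/(n · a_{ii}). -/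
open Matrix

/-!
The maximal residual component carries at least the average share `‖r‖²/n` of `‖r‖²`.
Projecting onto the coordinate `i` (Galerkin step with `E = eᵢ`) moves `x` by
`(rᵢ / aᵢᵢ) eᵢ`; since `A d = r`, expanding the `A`-norm of `d - (rᵢ / aᵢᵢ) eᵢ` shows that the
squared error drops by exactly `rᵢ² / aᵢᵢ`.
-/

theorem dotProduct_self_le_card_mul_sq {ι : Type*} [Fintype ι] (r : ι → ℝ) (i : ι)
    (hi : ∀ k, |r k| ≤ |r i|) : r ⬝ᵥ r ≤ Fintype.card ι * r i ^ 2 := by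
  have hk : ∀ k, r k * r k ≤ r i ^ 2 := fun k => by
    rw [← sq, ← sq_abs, ← sq_abs (r i)]
    exact pow_le_pow_left₀ (abs_nonneg _) (hi k) 2
  calc r ⬝ᵥ r = ∑ k, r k * r k := rfl
    _ ≤ ∑ _k : ι, r i ^ 2 := Finset.sum_le_sum fun k _ => hk k
    _ = Fintype.card ι * r i ^ 2 := by simp

theorem inv_of_const_fin_one {K : Type*} [Field K] (a : K) :
    (of fun _ _ => a : Matrix (Fin 1) (Fin 1) K)⁻¹ = of fun _ _ => a⁻¹ := by
  rw [inv_def]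
  ext j k
  fin_cases j; fin_cases k
  simp [adjugate_fin_one, Ring.inverse_eq_inv']

def coordCol {ι : Type*} [DecidableEq ι] (K : Type*) [Zero K] [One K] (i : ι) :
    Matrix ι (Fin 1) K :=
  of fun i' _ => if i' = i then 1 else 0

section CoordinateColumn

variable {ι K : Type*} [DecidableEq ι]

theorem coordCol_transpose_mul_mul_coordCol [Fintype ι] [NonAssocSemiring K] (A : Matrix ι ι K) (i : ι) :
    (coordCol K i)ᵀ * A * coordCol K i = of fun _ _ => A i i := by
  ext a c
  simp [coordCol, mul_apply]

theorem coordCol_transpose_mulVec [Fintype ι] [NonAssocSemiring K] (r : ι → K) (i : ι) :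
    (coordCol K i)ᵀ *ᵥ r = fun _ => r i := by
  ext a
  simp [coordCol, mulVec, dotProduct]

theorem coordCol_mulVec [NonAssocSemiring K] (y : Fin 1 → K) (i : ι) :
    coordCol K i *ᵥ y = Pi.single i (y 0) := by
  ext j
  by_cases h : j = i
  · subst h; simp [coordCol, mulVec, dotProduct]
  · simp [coordCol, mulVec, dotProduct, h]

theorem coordCol_projection_eq_single [Fintype ι] [Field K] (A : Matrix ι ι K) (r : ι → K) (i : ι) :
    coordCol K i *ᵥ (((coordCol K i)ᵀ * A * coordCol K i)⁻¹ *ᵥ ((coordCol K i)ᵀ *ᵥ r)) =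
      Pi.single i (r i / A i i) := by
  rw [coordCol_transpose_mul_mul_coordCol, inv_of_const_fin_one, coordCol_transpose_mulVec,
    coordCol_mulVec]
  simp [mulVec, dotProduct, div_eq_inv_mul]

end CoordinateColumn

theorem dotProduct_mulVec_self_sub_sub {ι R : Type*} [Fintype ι] [CommRing R]
    {A : Matrix ι ι R} (hA : A.IsSymm) (d v : ι → R) :
    d ⬝ᵥ A *ᵥ d - (d - v) ⬝ᵥ A *ᵥ (d - v) = 2 * (A *ᵥ d ⬝ᵥ v) - v ⬝ᵥ A *ᵥ v := by
  have hdv : d ⬝ᵥ A *ᵥ v = A *ᵥ d ⬝ᵥ v := by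
    rw [dotProduct_mulVec, ← vecMul_transpose, hA.eq]
  have hvd : v ⬝ᵥ A *ᵥ d = A *ᵥ d ⬝ᵥ v := dotProduct_comm _ _
  rw [mulVec_sub, sub_dotProduct, dotProduct_sub, dotProduct_sub, hdv, hvd]
  ring

theorem dotProduct_mulVec_self_sub_sub_single {ι : Type*} [Fintype ι] [DecidableEq ι]
    {A : Matrix ι ι ℝ} (hA : A.IsSymm) {d r : ι → ℝ} (hAd : A *ᵥ d = r) (i : ι)
    (hAii : A i i ≠ 0) :
    d ⬝ᵥ A *ᵥ d - (d - Pi.single i (r i / A i i)) ⬝ᵥ A *ᵥ (d - Pi.single i (r i / A i i)) =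
      r i ^ 2 / A i i := by
  rw [dotProduct_mulVec_self_sub_sub hA, hAd, dotProduct_single, single_dotProduct,
    mulVec_single]
  simp only [Pi.smul_apply, col_apply, op_smul_eq_mul]
  field_simp
  ring

theorem stmt17_general {n : ℕ} (A : Matrix (Fin n) (Fin n) ℝ) (hA : A.PosDef)
    (b x r : Fin n → ℝ) (hr : r = b - A *ᵥ x)
    (i : Fin n) (hi : ∀ k : Fin n, |r k| ≤ |r i|)
    (E : Matrix (Fin n) (Fin 1) ℝ)
    (hE : E = Matrix.of fun i' _ => if i' = i then (1 : ℝ) else 0)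
    (y : Fin 1 → ℝ) (hy : y = (Eᵀ * A * E)⁻¹ *ᵥ (Eᵀ *ᵥ r))
    (xnew : Fin n → ℝ) (hxnew : xnew = x + E *ᵥ y)
    (d dnew : Fin n → ℝ) (hd : d = A⁻¹ *ᵥ b - x) (hdnew : dnew = A⁻¹ *ᵥ b - xnew) :
    (r i) ^ 2 ≥ (r ⬝ᵥ r) / n ∧
      d ⬝ᵥ A *ᵥ d - dnew ⬝ᵥ A *ᵥ dnew ≥ (r ⬝ᵥ r) / (n * A i i) := by
  have hn : (0 : ℝ) < n := by exact_mod_cast i.pos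
  have hAii : 0 < A i i := hA.diag_pos
  have hsq : r ⬝ᵥ r / n ≤ r i ^ 2 := by
    rw [div_le_iff₀ hn, mul_comm]
    simpa using dotProduct_self_le_card_mul_sq r i hi
  have hAd : A *ᵥ d = r := by
    rw [hd, mulVec_sub, mulVec_mulVec, mul_nonsing_inv _ hA.det_pos.ne'.isUnit, one_mulVec, hr]
  have hdnew_eq : dnew = d - Pi.single i (r i / A i i) := by
    rw [hdnew, hxnew, hd, hy, show E = coordCol ℝ i from hE, coordCol_projection_eq_single]
    abel
  refine ⟨hsq, ?_⟩
  have hAsymm : A.IsSymm := isHermitian_iff_isSymm.mp hA.isHermitian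
  rw [hdnew_eq, dotProduct_mulVec_self_sub_sub_single hAsymm hAd i hAii.ne', ← div_div]
  exact div_le_div_of_nonneg_right hsq hAii.le

/-- With `r = b - Ax ≠ 0` and `i` an index of a largest-magnitude component of
`r`, taking `J = {i}`: `r_i² ≥ ‖r‖₂²/n` and the single-step A-norm error
reduction satisfies `‖d‖_A² - ‖d_new‖_A² ≥ ‖r‖₂²/(n · a_{ii})`. -/
theorem stmt17 {n : ℕ} (A : Matrix (Fin n) (Fin n) ℝ) (hA : A.PosDef)
    (b x r : Fin n → ℝ) (hr : r = b - A *ᵥ x) (hr0 : r ≠ 0)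
    (i : Fin n) (hi : ∀ k : Fin n, |r k| ≤ |r i|)
    (E : Matrix (Fin n) (Fin 1) ℝ)
    (hE : E = Matrix.of fun i' _ => if i' = i then (1 : ℝ) else 0)
    (y : Fin 1 → ℝ) (hy : y = (Eᵀ * A * E)⁻¹ *ᵥ (Eᵀ *ᵥ r))
    (xnew : Fin n → ℝ) (hxnew : xnew = x + E *ᵥ y)
    (d dnew : Fin n → ℝ) (hd : d = A⁻¹ *ᵥ b - x) (hdnew : dnew = A⁻¹ *ᵥ b - xnew) :
    (r i) ^ 2 ≥ (r ⬝ᵥ r) / n ∧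
      d ⬝ᵥ A *ᵥ d - dnew ⬝ᵥ A *ᵥ dnew ≥ (r ⬝ᵥ r) / (n * A i i) :=
  stmt17_general A hA b x r hr i hi E hE y hy xnew hxnew d dnew hd hdnew
end
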